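/- Let G be an infinite group and z ∈ K_par G. If there exists an infinite subset S ⊆ G with z e_g = 0 for all g ∈ S, then z = 0. -/

import Mathlib

/-- The defining relations of Exel's semigroup `S(G)` of a group `G`:
`[1] = 1`, `[s⁻¹][s][t] = [s⁻¹][st]`, `[s][t][t⁻¹] = [st][t⁻¹]`. -/
inductive ExelRel (G : Type*) [Group G] : FreeMonoid G → FreeMonoid G → Prop
  | one : ExelRel G (FreeMonoid.of 1) 1
  | left (s t : G) : ExelRel G
      (FreeMonoid.of s⁻¹ * FreeMonoid.of s * FreeMonoid.of t)
      (FreeMonoid.of s⁻¹ * FreeMonoid.of (s * t))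
  | right (s t : G) : ExelRel G
      (FreeMonoid.of s * FreeMonoid.of t * FreeMonoid.of t⁻¹)
      (FreeMonoid.of (s * t) * FreeMonoid.of t⁻¹)

/-- The congruence on the free monoid on `G` generated by the Exel relations. -/
def ExelCon (G : Type*) [Group G] : Con (FreeMonoid G) := conGen (ExelRel G)

/-- Exel's semigroup (an inverse monoid) `S(G)` of the group `G`. -/
abbrev ExelMonoid (G : Type*) [Group G] := (ExelCon G).Quotient

/-- The canonical generator `[g]` of `S(G)`. -/
def ExelMonoid.of {G : Type*} [Group G] (g : G) : ExelMonoid G :=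
  (ExelCon G).mk' (FreeMonoid.of g)

/-- The idempotent `e_g := [g][g⁻¹]` in `S(G)`. -/
def ExelMonoid.e {G : Type*} [Group G] (g : G) : ExelMonoid G :=
  ExelMonoid.of g * ExelMonoid.of g⁻¹

/-- The partial group algebra `K_par G`: the semigroup `K`-algebra of Exel's semigroup. -/
abbrev KparG (K G : Type*) [CommRing K] [Group G] := MonoidAlgebra K (ExelMonoid G)

/-- The canonical generator `[g]` of `K_par G`. -/
noncomputable def pr (K : Type*) {G : Type*} [CommRing K] [Group G] (g : G) : KparG K G :=
  MonoidAlgebra.of K (ExelMonoid G) (ExelMonoid.of g)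

/-- The idempotent `e_g := [g][g⁻¹]` in `K_par G`. -/
noncomputable def eK (K : Type*) {G : Type*} [CommRing K] [Group G] (g : G) : KparG K G :=
  pr K g * pr K g⁻¹

/-!
Every element of `S(G)` has the normal form `(∏_{a ∈ A} e_a) [g]` with `A` finite and `1, g ∈ A`,
and the pair `(A, g)` is an invariant: it is the image in the Birget–Rhodes expansion. Right
multiplication by `e_g` sends `(A, h)` to `(A ∪ {h g}, h)`, so distinct `s, t ∈ S(G)` can satisfy
`s e_g = t e_g` only for the finitely many `g` with `h g ∈ A ∪ B`. Hence for all but finitely many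
`g`, right multiplication by `e_g` is injective on the finite support of `z`, and then `z e_g = 0`
forces `z = 0`.
-/

open scoped Pointwise

namespace ExelMonoid

variable {G : Type*} [Group G]

theorem mk'_eq_mk'_of_exelRel {x y : FreeMonoid G} (h : ExelRel G x y) :
    (ExelCon G).mk' x = (ExelCon G).mk' y :=
  (Con.eq _).mpr (ConGen.Rel.of _ _ h)

@[simp]
theorem of_one : of (1 : G) = 1 := by
  simpa [of] using mk'_eq_mk'_of_exelRel (ExelRel.one (G := G))

theorem of_inv_mul_of_mul_of (s t : G) : of s⁻¹ * of s * of t = of s⁻¹ * of (s * t) := by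
  simpa [of] using mk'_eq_mk'_of_exelRel (ExelRel.left s t)

theorem of_mul_of_mul_of_inv (s t : G) : of s * of t * of t⁻¹ = of (s * t) * of t⁻¹ := by
  simpa [of] using mk'_eq_mk'_of_exelRel (ExelRel.right s t)

theorem of_mul_of (a b : G) : of a * of b = e a * of (a * b) := by
  simpa [e, mul_assoc] using (of_inv_mul_of_mul_of a⁻¹ (a * b)).symm

theorem e_mul_of (a b : G) : e a * of b = of b * e (b⁻¹ * a) := by
  calc e a * of b = of a * of (a⁻¹ * b) := by simpa [e] using of_inv_mul_of_mul_of a⁻¹ b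
    _ = of b * of (b⁻¹ * a) * of (a⁻¹ * b) := by simpa using (of_mul_of_mul_of_inv b (b⁻¹ * a)).symm
    _ = of b * e (b⁻¹ * a) := by rw [e, mul_assoc, mul_inv_rev, inv_inv]

theorem of_mul_e (a b : G) : of a * e b = e (a * b) * of a := by
  simpa using (e_mul_of (a * b) a).symm

theorem commute_e (a b : G) : Commute (e a) (e b) := by
  calc e a * e b = e a * of b * of b⁻¹ := (mul_assoc _ _ _).symm
    _ = of b * (of b⁻¹ * e a) := by rw [e_mul_of, mul_assoc, of_mul_e]
    _ = e b * e a := (mul_assoc _ _ _).symm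

@[simp]
theorem e_one : e (1 : G) = 1 := by
  simp [e]

theorem isIdempotentElem_e (a : G) : IsIdempotentElem (e a) := by
  have h : e a * of a = of a := by simpa [e] using of_inv_mul_of_mul_of a⁻¹ a
  calc e a * e a = e a * of a * of a⁻¹ := (mul_assoc _ _ _).symm
    _ = e a := by rw [h, e]

noncomputable def eProd (A : Finset G) : ExelMonoid G :=
  A.noncommProd e fun a _ b _ _ => commute_e a b

@[simp]
theorem eProd_empty : eProd (∅ : Finset G) = 1 :=
  Finset.noncommProd_empty _ _

variable [DecidableEq G]

theorem eProd_insert_of_notMem {A : Finset G} {a : G} (ha : a ∉ A) :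
    eProd (insert a A) = e a * eProd A :=
  Finset.noncommProd_insert_of_notMem _ _ _ _ ha

theorem eProd_mul_e_of_mem {A : Finset G} {a : G} (ha : a ∈ A) : eProd A * e a = eProd A := by
  rw [eProd, ← Finset.noncommProd_erase_mul A ha e fun a _ b _ _ => commute_e a b, mul_assoc,
    (isIdempotentElem_e a).eq]

theorem eProd_insert_one (A : Finset G) : eProd (insert 1 A) = eProd A := by
  by_cases h : (1 : G) ∈ A
  · rw [Finset.insert_eq_self.mpr h]
  · rw [eProd_insert_of_notMem h, e_one, one_mul]

theorem of_mul_eProd (x : G) (A : Finset G) : of x * eProd A = eProd (x • A) * of x := by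
  induction A using Finset.induction_on with
  | empty => simp
  | insert a A ha ih =>
    have hxa : x • a ∉ x • A := by rwa [Finset.smul_mem_smul_finset_iff]
    rw [Finset.smul_finset_insert, eProd_insert_of_notMem ha, eProd_insert_of_notMem hxa,
      ← mul_assoc, of_mul_e, mul_assoc, ih, ← mul_assoc, smul_eq_mul]

theorem eProd_insert_one_smul_mul_of {A : Finset G} (hA : 1 ∈ A) (x g : G) :
    eProd (insert 1 (x • A)) * of (x * g) = of x * (eProd A * of g) := by
  have hx : x ∈ x • A := by simpa using Finset.smul_mem_smul_finset (a := x) hA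
  calc eProd (insert 1 (x • A)) * of (x * g) = eProd (x • A) * e x * of (x * g) := by
        rw [eProd_insert_one, eProd_mul_e_of_mem hx]
    _ = eProd (x • A) * of x * of g := by rw [mul_assoc, ← of_mul_of, ← mul_assoc]
    _ = of x * (eProd A * of g) := by rw [← of_mul_eProd, mul_assoc]

end ExelMonoid

/-- The Birget–Rhodes expansion of `G`: pairs `(A, g)` with `A` finite and `1, g ∈ A`, multiplied
by `(A, g) (B, h) = (A ∪ g B, g h)`. By Kellendonk–Lawson, `[g] ↦ ({1, g}, g)` is an isomorphism
`S(G) ≃* BirgetRhodes G`. -/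
@[ext]
structure BirgetRhodes (G : Type*) [Group G] [DecidableEq G] where
  carrier : Finset G
  elem : G
  one_mem : 1 ∈ carrier
  elem_mem : elem ∈ carrier

namespace BirgetRhodes

variable {G : Type*} [Group G] [DecidableEq G]

instance : Mul (BirgetRhodes G) where
  mul p q := ⟨p.carrier ∪ p.elem • q.carrier, p.elem * q.elem,
    Finset.mem_union_left _ p.one_mem,
    Finset.mem_union_right _ (Finset.smul_mem_smul_finset q.elem_mem)⟩

instance : One (BirgetRhodes G) where
  one := ⟨{1}, 1, Finset.mem_singleton_self 1, Finset.mem_singleton_self 1⟩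

@[simp] theorem carrier_mul (p q : BirgetRhodes G) :
    (p * q).carrier = p.carrier ∪ p.elem • q.carrier := rfl

@[simp] theorem elem_mul (p q : BirgetRhodes G) : (p * q).elem = p.elem * q.elem := rfl

@[simp] theorem carrier_one : (1 : BirgetRhodes G).carrier = {1} := rfl

@[simp] theorem elem_one : (1 : BirgetRhodes G).elem = 1 := rfl

instance : Monoid (BirgetRhodes G) where
  mul_assoc p q r := by
    ext <;> simp [Finset.smul_finset_union, smul_smul, Finset.union_assoc, mul_assoc]
  one_mul p := by ext <;> simp [p.one_mem]
  mul_one p := by ext <;> simp [p.elem_mem]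

def of (g : G) : BirgetRhodes G := ⟨{1, g}, g, by simp, by simp⟩

@[simp] theorem carrier_of (g : G) : (of g).carrier = {1, g} := rfl

@[simp] theorem elem_of (g : G) : (of g).elem = g := rfl

theorem of_one : of (1 : G) = 1 := by
  ext <;> simp

theorem of_inv_mul_of_mul_of (s t : G) : of s⁻¹ * of s * of t = of s⁻¹ * of (s * t) := by
  ext <;> simp [Finset.smul_finset_insert, mul_assoc]

theorem of_mul_of_mul_of_inv (s t : G) : of s * of t * of t⁻¹ = of (s * t) * of t⁻¹ := by
  ext <;> simp [Finset.smul_finset_insert, mul_assoc, or_left_comm]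

theorem carrier_of_mul (x : G) (p : BirgetRhodes G) :
    (of x * p).carrier = insert 1 (x • p.carrier) := by
  have hx : x ∈ x • p.carrier := by simpa using Finset.smul_mem_smul_finset (a := x) p.one_mem
  simp [Finset.insert_union, hx]

theorem carrier_mul_of_mul_of_inv (p : BirgetRhodes G) (g : G) :
    (p * (of g * of g⁻¹)).carrier = insert (p.elem * g) p.carrier := by
  simp [Finset.smul_finset_insert, Finset.insert_eq_of_mem p.elem_mem]

end BirgetRhodes

namespace ExelMonoid

variable {G : Type*} [Group G]

section DecidableEq

variable [DecidableEq G]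

theorem exelCon_le_ker : ExelCon G ≤ Con.ker (FreeMonoid.lift (BirgetRhodes.of (G := G))) := by
  refine Con.conGen_le.mpr ?_
  rintro _ _ (_ | ⟨s, t⟩ | ⟨s, t⟩) <;>
    simp only [Con.ker_rel, map_mul, FreeMonoid.lift_eval_of, map_one]
  · exact BirgetRhodes.of_one
  · exact BirgetRhodes.of_inv_mul_of_mul_of s t
  · exact BirgetRhodes.of_mul_of_mul_of_inv s t

noncomputable def toBirgetRhodes : ExelMonoid G →* BirgetRhodes G :=
  (ExelCon G).lift _ exelCon_le_ker

@[simp]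
theorem toBirgetRhodes_of (g : G) : toBirgetRhodes (of g) = BirgetRhodes.of g :=
  FreeMonoid.lift_eval_of _ _

theorem eProd_mul_of_toBirgetRhodes (s : ExelMonoid G) :
    eProd (toBirgetRhodes s).carrier * of (toBirgetRhodes s).elem = s := by
  induction s using Con.induction_on with | _ w => ?_
  induction w using FreeMonoid.inductionOn' with
  | one => simp [eProd]
  | of_mul x w ih =>
    change eProd (toBirgetRhodes (of x * (w : ExelMonoid G))).carrier *
      of (toBirgetRhodes (of x * (w : ExelMonoid G))).elem = of x * (w : ExelMonoid G)
    rw [map_mul, toBirgetRhodes_of, BirgetRhodes.carrier_of_mul, BirgetRhodes.elem_mul,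
      BirgetRhodes.elem_of, eProd_insert_one_smul_mul_of (toBirgetRhodes _).one_mem, ih]

theorem toBirgetRhodes_injective : Function.Injective (toBirgetRhodes (G := G)) :=
  Function.LeftInverse.injective (g := fun p : BirgetRhodes G => eProd p.carrier * of p.elem)
    eProd_mul_of_toBirgetRhodes

end DecidableEq

theorem finite_setOf_mul_e_eq {s t : ExelMonoid G} (hst : s ≠ t) :
    {g | s * e g = t * e g}.Finite := by
  classical
  set p := toBirgetRhodes s
  set q := toBirgetRhodes t
  refine ((p.carrier ∪ q.carrier).finite_toSet.preimage
    (mul_right_injective p.elem).injOn).subset ?_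
  intro g hg
  have hmul : p * (BirgetRhodes.of g * BirgetRhodes.of g⁻¹) =
      q * (BirgetRhodes.of g * BirgetRhodes.of g⁻¹) := by
    simpa only [e, map_mul, toBirgetRhodes_of] using congrArg toBirgetRhodes hg
  have helem : p.elem = q.elem := by
    simpa using congrArg BirgetRhodes.elem hmul
  have hcarrier : insert (p.elem * g) p.carrier = insert (p.elem * g) q.carrier := by
    have := congrArg BirgetRhodes.carrier hmul
    rwa [BirgetRhodes.carrier_mul_of_mul_of_inv, BirgetRhodes.carrier_mul_of_mul_of_inv,
      ← helem] at this
  by_contra hg'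
  simp only [Set.mem_preimage, Finset.coe_union, Set.mem_union, Finset.mem_coe, not_or] at hg'
  refine hst (toBirgetRhodes_injective (BirgetRhodes.ext ?_ helem))
  rw [← Finset.erase_insert hg'.1, ← Finset.erase_insert hg'.2, hcarrier]

end ExelMonoid

namespace MonoidAlgebra

variable {R M : Type*} [Semiring R] [Mul M]

theorem eq_zero_of_mul_single_one_eq_zero {x : R[M]} {m : M}
    (hm : Set.InjOn (· * m) x.coeff.support) (h : x * single m 1 = 0) : x = 0 := by
  rw [← coeff_eq_zero]
  ext a
  by_cases ha : a ∈ x.coeff.support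
  · simpa [h] using (coeff_mul_single_eq_coeff_mul (r := (1 : R)) a
      fun b hb => hm.eq_iff hb ha).symm
  · exact Finsupp.notMem_support_iff.mp ha

theorem eq_zero_of_forall_mul_single_one_eq_zero {ι : Type*} {S : Set ι} (hS : S.Infinite)
    {m : ι → M} (hm : ∀ a b, a ≠ b → {i | a * m i = b * m i}.Finite) {x : R[M]}
    (h : ∀ i ∈ S, x * single (m i) 1 = 0) : x = 0 := by
  let collisions := ⋃ p ∈ (x.coeff.support : Set M).offDiag, {i | p.1 * m i = p.2 * m i}
  have hfin : collisions.Finite :=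
    x.coeff.support.finite_toSet.offDiag.biUnion fun p hp => hm _ _ hp.2.2
  obtain ⟨i, hiS, hi⟩ := (hS.sdiff hfin).nonempty
  refine eq_zero_of_mul_single_one_eq_zero (fun a ha b hb hab => ?_) (h i hiS)
  by_contra hne
  exact hi (Set.mem_biUnion (x := (a, b)) ⟨ha, hb, hne⟩ hab)

end MonoidAlgebra

theorem eK_eq_single (K : Type*) {G : Type*} [CommRing K] [Group G] (g : G) :
    eK K g = MonoidAlgebra.single (ExelMonoid.e g) 1 := by
  rw [eK, pr, pr, MonoidAlgebra.of_apply, MonoidAlgebra.of_apply,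
    MonoidAlgebra.single_mul_single, one_mul, ExelMonoid.e]

theorem kpar_zero_of_annihilated_general (K : Type*) {G : Type*} [CommRing K] [Group G]
    (z : KparG K G) (S : Set G) (hS : S.Infinite)
    (h : ∀ g ∈ S, z * eK K g = 0) : z = 0 :=
  MonoidAlgebra.eq_zero_of_forall_mul_single_one_eq_zero hS
    (fun _ _ => ExelMonoid.finite_setOf_mul_e_eq) fun g hg => eK_eq_single K g ▸ h g hg

/-- Let `G` be an infinite group and `z ∈ K_par G`. If there is an infinite subset
`S ⊆ G` with `z e_g = 0` for all `g ∈ S`, then `z = 0`. -/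
theorem kpar_zero_of_annihilated (K : Type*) {G : Type*} [CommRing K] [Group G]
    [Infinite G] (z : KparG K G) (S : Set G) (hS : S.Infinite)
    (h : ∀ g ∈ S, z * eK K g = 0) : z = 0 :=
  kpar_zero_of_annihilated_general K z S hS h
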